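/- The modular commutator vanishes on product states across any bipartition: if a positive definite density matrix on H_A ⊗ H_B ⊗ H_C factorizes as ρ_ABC = ρ_A ⊗ ρ_BC, or as ρ_ABC = ρ_AB ⊗ ρ_C, or as ρ_ABC = ρ_B ⊗ ρ_AC (with the appropriate reordering of factors), then J(A,B,C)_ρ = 0. -/

import Mathlib

open scoped ComplexOrder

noncomputable section

namespace ModularCommutator

open Matrix Complex

/-- Matrix logarithm of a Hermitian matrix, defined through the spectral theorem
(junk value `0` on non-Hermitian matrices). -/
noncomputable def mlog {n : Type} [Fintype n] [DecidableEq n] (M : Matrix n n ℂ) :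
    Matrix n n ℂ :=
  if h : M.IsHermitian then
    (h.eigenvectorUnitary : Matrix n n ℂ) *
      Matrix.diagonal (fun i => (Real.log (h.eigenvalues i) : ℂ)) *
      (star (h.eigenvectorUnitary : Matrix n n ℂ))
  else 0

variable {A B C : Type} [Fintype A] [DecidableEq A] [Fintype B] [DecidableEq B]
  [Fintype C] [DecidableEq C]

/-- Partial trace onto the factors `A ⊗ B`. -/
def ptAB (ρ : Matrix (A × B × C) (A × B × C) ℂ) : Matrix (A × B) (A × B) ℂ :=
  fun p q => ∑ c : C, ρ (p.1, p.2, c) (q.1, q.2, c)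

/-- Partial trace onto the factors `B ⊗ C`. -/
def ptBC (ρ : Matrix (A × B × C) (A × B × C) ℂ) : Matrix (B × C) (B × C) ℂ :=
  fun p q => ∑ a : A, ρ (a, p.1, p.2) (a, q.1, q.2)

/-- Partial trace onto the factors `A ⊗ C`. -/
def ptAC (ρ : Matrix (A × B × C) (A × B × C) ℂ) : Matrix (A × C) (A × C) ℂ :=
  fun p q => ∑ b : B, ρ (p.1, b, p.2) (q.1, b, q.2)

/-- Partial trace onto the factor `A`. -/
def ptA (ρ : Matrix (A × B × C) (A × B × C) ℂ) : Matrix A A ℂ :=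
  fun a a' => ∑ b : B, ∑ c : C, ρ (a, b, c) (a', b, c)

/-- Partial trace onto the factor `B`. -/
def ptB (ρ : Matrix (A × B × C) (A × B × C) ℂ) : Matrix B B ℂ :=
  fun b b' => ∑ a : A, ∑ c : C, ρ (a, b, c) (a, b', c)

/-- Partial trace onto the factor `C`. -/
def ptC (ρ : Matrix (A × B × C) (A × B × C) ℂ) : Matrix C C ℂ :=
  fun c c' => ∑ a : A, ∑ b : B, ρ (a, b, c) (a, b, c')

/-- Extension of an operator on `A ⊗ B` by the identity on `C`. -/
def embAB (M : Matrix (A × B) (A × B) ℂ) : Matrix (A × B × C) (A × B × C) ℂ :=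
  fun x y => if x.2.2 = y.2.2 then M (x.1, x.2.1) (y.1, y.2.1) else 0

/-- Extension of an operator on `B ⊗ C` by the identity on `A`. -/
def embBC (M : Matrix (B × C) (B × C) ℂ) : Matrix (A × B × C) (A × B × C) ℂ :=
  fun x y => if x.1 = y.1 then M x.2 y.2 else 0

/-- Extension of an operator on `B` by the identity on `A ⊗ C`. -/
def embB (M : Matrix B B ℂ) : Matrix (A × B × C) (A × B × C) ℂ :=
  fun x y => if x.1 = y.1 ∧ x.2.2 = y.2.2 then M x.2.1 y.2.1 else 0

/-- The modular Hamiltonian `K_{AB}(ρ) = −ln ρ_{AB}`, extended by the identity on `C`. -/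
def KAB (ρ : Matrix (A × B × C) (A × B × C) ℂ) : Matrix (A × B × C) (A × B × C) ℂ :=
  embAB (-(mlog (ptAB ρ)))

/-- The modular Hamiltonian `K_{BC}(ρ) = −ln ρ_{BC}`, extended by the identity on `A`. -/
def KBC (ρ : Matrix (A × B × C) (A × B × C) ℂ) : Matrix (A × B × C) (A × B × C) ℂ :=
  embBC (-(mlog (ptBC ρ)))

/-- The modular commutator `J(A,B,C)_ρ = i · Tr(ρ [K_{AB}(ρ), K_{BC}(ρ)])`. -/
def Jmod (ρ : Matrix (A × B × C) (A × B × C) ℂ) : ℂ :=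
  Complex.I * (ρ * (KAB ρ * KBC ρ - KBC ρ * KAB ρ)).trace

/-!
Each factorization makes one of the pairs `(ρ, K_AB)`, `(ρ, K_BC)`, `(K_AB, K_BC)` commute, and
each of these kills `Tr(ρ [K_AB, K_BC])` by cyclicity of the trace. Since a matrix has finite
spectrum, its logarithm agrees with a Lagrange interpolation polynomial in it, so `K_AB` and `K_BC`
commute with everything that commutes with the embedded reduced states `ρ_AB ⊗ 1` and `1 ⊗ ρ_BC`.
For `ρ = ρ_A ⊗ ρ_BC` the state commutes with `1 ⊗ ρ_BC`, for `ρ = ρ_AB ⊗ ρ_C` with `ρ_AB ⊗ 1`, and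
for `ρ = ρ_B ⊗ ρ_AC` the reduced states are `ρ_A ⊗ ρ_B ⊗ 1` and `1 ⊗ ρ_B ⊗ ρ_C`, which commute.
-/

open Kronecker

open Polynomial in
theorem _root_.cfc_mem_adjoin_singleton_of_finite {R : Type*} [Ring R] [StarRing R]
    [Algebra ℝ R] [TopologicalSpace R] [IsTopologicalRing R] [T2Space R]
    [ContinuousFunctionalCalculus ℝ R IsSelfAdjoint]
    {a : R} (ha : (spectrum ℝ a).Finite) (f : ℝ → ℝ) :
    cfc f a ∈ Algebra.adjoin ℝ {a} := by
  by_cases hsa : IsSelfAdjoint a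
  · have hp : Set.EqOn f (Lagrange.interpolate ha.toFinset id f).eval (spectrum ℝ a) :=
      fun x hx => (Lagrange.eval_interpolate_at_node f (Set.injOn_id _)
        (ha.mem_toFinset.2 hx)).symm
    rw [cfc_congr hp, cfc_polynomial _ a hsa]
    exact aeval_mem_adjoin_singleton ℝ a
  · rw [cfc_apply_of_not_predicate a hsa]
    exact zero_mem _

theorem _root_.AlgHom.apply_mem_adjoin_singleton {R S T : Type*} [CommSemiring R] [Semiring S]
    [Semiring T] [Algebra R S] [Algebra R T] (φ : S →ₐ[R] T) {a x : S}
    (hx : x ∈ Algebra.adjoin R {a}) : φ x ∈ Algebra.adjoin R {φ a} := by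
  rw [← AlgHom.map_adjoin_singleton]
  exact Subalgebra.mem_map.2 ⟨x, hx, rfl⟩

theorem _root_.Matrix.trace_mul_commutator_eq_zero_of_commute_left {n R : Type*} [Fintype n]
    [CommRing R] {ρ X : Matrix n n R} (h : Commute ρ X) (Y : Matrix n n R) :
    (ρ * (X * Y - Y * X)).trace = 0 := by
  rw [mul_sub, trace_sub, ← mul_assoc, h.eq, mul_assoc, trace_mul_comm X, mul_assoc, sub_self]

theorem _root_.Matrix.trace_mul_commutator_eq_zero_of_commute_right {n R : Type*} [Fintype n]
    [CommRing R] {ρ Y : Matrix n n R} (h : Commute ρ Y) (X : Matrix n n R) :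
    (ρ * (X * Y - Y * X)).trace = 0 := by
  rw [← neg_sub, mul_neg, trace_neg, trace_mul_commutator_eq_zero_of_commute_left h, neg_zero]

theorem _root_.Commute.kronecker {m n R : Type*} [Fintype m] [Fintype n]
    [CommSemiring R] {M M' : Matrix m m R} {N N' : Matrix n n R} (hM : Commute M M')
    (hN : Commute N N') : Commute (M ⊗ₖ N) (M' ⊗ₖ N') := by
  rw [Commute, SemiconjBy, ← mul_kronecker_mul, ← mul_kronecker_mul, hM.eq, hN.eq]

theorem mlog_eq_cfc {n : Type} [Fintype n] [DecidableEq n] (M : Matrix n n ℂ) :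
    mlog M = cfc Real.log M := by
  by_cases hM : M.IsHermitian
  · rw [mlog, dif_pos hM, hM.cfc_eq, IsHermitian.cfc, Unitary.conjStarAlgAut_apply]
    rfl
  · rw [mlog, dif_neg hM]
    exact (cfc_apply_of_not_predicate M hM).symm

theorem mlog_mem_adjoin_singleton {n : Type} [Fintype n] [DecidableEq n] (M : Matrix n n ℂ) :
    mlog M ∈ Algebra.adjoin ℝ {M} :=
  mlog_eq_cfc M ▸ cfc_mem_adjoin_singleton_of_finite M.finite_real_spectrum _

def embABAlgHom : Matrix (A × B) (A × B) ℂ →ₐ[ℂ] Matrix (A × B × C) (A × B × C) ℂ :=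
  (reindexAlgEquiv ℂ ℂ (Equiv.prodAssoc A B C)).toAlgHom.comp
    ((kroneckerAlgEquiv (A × B) C ℂ).toAlgHom.comp Algebra.TensorProduct.includeLeft)

def embBCAlgHom : Matrix (B × C) (B × C) ℂ →ₐ[ℂ] Matrix (A × B × C) (A × B × C) ℂ :=
  (kroneckerAlgEquiv A (B × C) ℂ).toAlgHom.comp Algebra.TensorProduct.includeRight

omit [Fintype A] [DecidableEq A] [Fintype B] [DecidableEq B] [Fintype C] in
theorem embAB_eq_reindex (M : Matrix (A × B) (A × B) ℂ) :
    (embAB M : Matrix (A × B × C) (A × B × C) ℂ) =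
      reindex (Equiv.prodAssoc A B C) (Equiv.prodAssoc A B C) (M ⊗ₖ 1) := by
  ext x y
  simp [embAB, one_apply]

omit [Fintype A] [DecidableEq A] [Fintype B] [DecidableEq B] [Fintype C] in
theorem embAB_kronecker (P : Matrix A A ℂ) (Q : Matrix B B ℂ) :
    (embAB (P ⊗ₖ Q) : Matrix (A × B × C) (A × B × C) ℂ) = P ⊗ₖ (Q ⊗ₖ 1) := by
  ext x y
  simp [embAB, one_apply]

omit [Fintype A] [Fintype B] [DecidableEq B] [Fintype C] [DecidableEq C] in
theorem embBC_eq_one_kronecker (N : Matrix (B × C) (B × C) ℂ) :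
    (embBC N : Matrix (A × B × C) (A × B × C) ℂ) = 1 ⊗ₖ N := by
  ext x y
  simp [embBC, one_apply]

theorem embABAlgHom_apply (M : Matrix (A × B) (A × B) ℂ) :
    (embABAlgHom M : Matrix (A × B × C) (A × B × C) ℂ) = embAB M := by
  simp [embABAlgHom, embAB_eq_reindex]

theorem embBCAlgHom_apply (N : Matrix (B × C) (B × C) ℂ) :
    (embBCAlgHom N : Matrix (A × B × C) (A × B × C) ℂ) = embBC N := by
  simp [embBCAlgHom, embBC_eq_one_kronecker]

section ModularHamiltonians

variable (ρ : Matrix (A × B × C) (A × B × C) ℂ)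

theorem KAB_mem_adjoin : KAB ρ ∈ Algebra.adjoin ℝ {embAB (ptAB ρ)} := by
  rw [KAB, ← embABAlgHom_apply, ← embABAlgHom_apply, map_neg]
  exact neg_mem ((embABAlgHom.restrictScalars ℝ).apply_mem_adjoin_singleton
    (mlog_mem_adjoin_singleton _))

theorem KBC_mem_adjoin : KBC ρ ∈ Algebra.adjoin ℝ {embBC (ptBC ρ)} := by
  rw [KBC, ← embBCAlgHom_apply, ← embBCAlgHom_apply, map_neg]
  exact neg_mem ((embBCAlgHom.restrictScalars ℝ).apply_mem_adjoin_singleton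
    (mlog_mem_adjoin_singleton _))

theorem Jmod_eq_zero_of_commute_embAB (h : Commute ρ (embAB (ptAB ρ))) : Jmod ρ = 0 := by
  rw [Jmod, trace_mul_commutator_eq_zero_of_commute_left
    (Algebra.commute_of_mem_adjoin_singleton_of_commute (KAB_mem_adjoin ρ) h), mul_zero]

theorem Jmod_eq_zero_of_commute_embBC (h : Commute ρ (embBC (ptBC ρ))) : Jmod ρ = 0 := by
  rw [Jmod, trace_mul_commutator_eq_zero_of_commute_right
    (Algebra.commute_of_mem_adjoin_singleton_of_commute (KBC_mem_adjoin ρ) h), mul_zero]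

theorem Jmod_eq_zero_of_commute_embAB_embBC
    (h : Commute (embAB (ptAB ρ) : Matrix (A × B × C) (A × B × C) ℂ) (embBC (ptBC ρ))) :
    Jmod ρ = 0 := by
  have hK : Commute (KAB ρ) (KBC ρ) :=
    (Algebra.commute_of_mem_adjoin_singleton_of_commute (KAB_mem_adjoin ρ)
      (Algebra.commute_of_mem_adjoin_singleton_of_commute (KBC_mem_adjoin ρ) h).symm).symm
  rw [Jmod, hK.eq, sub_self, mul_zero, trace_zero, mul_zero]

theorem Jmod_eq_zero_of_eq_ptA_kronecker_ptBC (h : ρ = ptA ρ ⊗ₖ ptBC ρ) : Jmod ρ = 0 := by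
  refine Jmod_eq_zero_of_commute_embBC ρ ?_
  have hcomm : Commute (ptA ρ ⊗ₖ ptBC ρ) (1 ⊗ₖ ptBC ρ) :=
    Commute.kronecker (.one_right _) (.refl _)
  rwa [← h, ← embBC_eq_one_kronecker] at hcomm

theorem Jmod_eq_zero_of_eq_ptAB_kronecker_ptC
    (h : ρ = reindex (Equiv.prodAssoc A B C) (Equiv.prodAssoc A B C) (ptAB ρ ⊗ₖ ptC ρ)) :
    Jmod ρ = 0 := by
  refine Jmod_eq_zero_of_commute_embAB ρ ?_
  have hcomm := (Commute.kronecker (.refl (ptAB ρ)) (.one_right (ptC ρ))).map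
    (reindexAlgEquiv ℂ ℂ (Equiv.prodAssoc A B C))
  rwa [coe_reindexAlgEquiv, ← h, ← embAB_eq_reindex] at hcomm

variable {ρ}

omit [DecidableEq A] [DecidableEq B] [DecidableEq C] in
theorem ptAB_eq_kronecker_of_eq_ptB_mul_ptAC
    (h : ∀ x y : A × B × C, ρ x y = ptB ρ x.2.1 y.2.1 * ptAC ρ (x.1, x.2.2) (y.1, y.2.2)) :
    ptAB ρ = ptA ρ ⊗ₖ ptB ρ := by
  ext p q
  calc ∑ c, ρ (p.1, p.2, c) (q.1, q.2, c)
      = ∑ c, ptB ρ p.2 q.2 * ptAC ρ (p.1, c) (q.1, c) := Finset.sum_congr rfl fun c _ => h _ _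
    _ = ptA ρ p.1 q.1 * ptB ρ p.2 q.2 := by
      rw [← Finset.mul_sum, mul_comm, ptA, Finset.sum_comm]
      rfl

omit [DecidableEq A] [DecidableEq B] [DecidableEq C] in
theorem ptBC_eq_kronecker_of_eq_ptB_mul_ptAC
    (h : ∀ x y : A × B × C, ρ x y = ptB ρ x.2.1 y.2.1 * ptAC ρ (x.1, x.2.2) (y.1, y.2.2)) :
    ptBC ρ = ptB ρ ⊗ₖ ptC ρ := by
  ext p q
  calc ∑ a, ρ (a, p.1, p.2) (a, q.1, q.2)
      = ∑ a, ptB ρ p.1 q.1 * ptAC ρ (a, p.2) (a, q.2) := Finset.sum_congr rfl fun a _ => h _ _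
    _ = ptB ρ p.1 q.1 * ptC ρ p.2 q.2 := by
      rw [← Finset.mul_sum]
      rfl

theorem Jmod_eq_zero_of_eq_ptB_mul_ptAC
    (h : ∀ x y : A × B × C, ρ x y = ptB ρ x.2.1 y.2.1 * ptAC ρ (x.1, x.2.2) (y.1, y.2.2)) :
    Jmod ρ = 0 := by
  refine Jmod_eq_zero_of_commute_embAB_embBC ρ ?_
  rw [ptAB_eq_kronecker_of_eq_ptB_mul_ptAC h, ptBC_eq_kronecker_of_eq_ptB_mul_ptAC h,
    embAB_kronecker, embBC_eq_one_kronecker]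
  exact Commute.kronecker (.one_right _) (Commute.kronecker (.refl _) (.one_left _))

end ModularHamiltonians

theorem modular_commutator_product_state_general
    (ρ : Matrix (A × B × C) (A × B × C) ℂ)
    (hfact :
      (∀ x y : A × B × C, ρ x y = ptA ρ x.1 y.1 * ptBC ρ x.2 y.2) ∨
      (∀ x y : A × B × C,
        ρ x y = ptAB ρ (x.1, x.2.1) (y.1, y.2.1) * ptC ρ x.2.2 y.2.2) ∨
      (∀ x y : A × B × C,
        ρ x y = ptB ρ x.2.1 y.2.1 * ptAC ρ (x.1, x.2.2) (y.1, y.2.2))) :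
    Jmod ρ = 0 := by
  rcases hfact with hA | hC | hB
  · exact Jmod_eq_zero_of_eq_ptA_kronecker_ptBC ρ (Matrix.ext hA)
  · exact Jmod_eq_zero_of_eq_ptAB_kronecker_ptC ρ (Matrix.ext hC)
  · exact Jmod_eq_zero_of_eq_ptB_mul_ptAC hB

/-- The modular commutator vanishes on product states across any
bipartition: if a positive definite density matrix on `H_A ⊗ H_B ⊗ H_C`
factorizes as `ρ_ABC = ρ_A ⊗ ρ_BC`, or as `ρ_ABC = ρ_AB ⊗ ρ_C`, or as
`ρ_ABC = ρ_B ⊗ ρ_AC` (with the appropriate reordering of factors), then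
`J(A,B,C)_ρ = 0`. -/
theorem modular_commutator_product_state
    (ρ : Matrix (A × B × C) (A × B × C) ℂ) (hρ : ρ.PosDef) (hTr : ρ.trace = 1)
    (hfact :
      (∀ x y : A × B × C, ρ x y = ptA ρ x.1 y.1 * ptBC ρ x.2 y.2) ∨
      (∀ x y : A × B × C,
        ρ x y = ptAB ρ (x.1, x.2.1) (y.1, y.2.1) * ptC ρ x.2.2 y.2.2) ∨
      (∀ x y : A × B × C,
        ρ x y = ptB ρ x.2.1 y.2.1 * ptAC ρ (x.1, x.2.2) (y.1, y.2.2))) :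
    Jmod ρ = 0 :=
  modular_commutator_product_state_general ρ hfact

end ModularCommutator
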